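/- Let λ ≥ 0. The function g : ℝⁿ → ℝ, g(z) = ½‖S_λ(z)‖², is differentiable at every z with gradient ∇g(z) = S_λ(z) (i.e. HasGradientAt g (S_λ(z)) z for every z ∈ ℝⁿ). -/

import Mathlib

open scoped RealInnerProductSpace BigOperators

noncomputable def softShrink {n : ℕ} (lam : ℝ) (x : EuclideanSpace ℝ (Fin n)) :
    EuclideanSpace ℝ (Fin n) :=
  WithLp.toLp 2 (fun i => Real.sign (x i) * max (|x i| - lam) 0)

lemma softShrink_hasDerivAt_aux (lam : ℝ) (hlam : 0 ≤ lam) (t : ℝ) :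
    HasDerivAt (fun s : ℝ => (1 / 2) * max (|s| - lam) 0 ^ 2)
      (Real.sign t * max (|t| - lam) 0) t := by
  rcases lt_trichotomy (|t|) lam with h | h | h
  · -- |t| < lam : f is eventually 0
    have hmax : max (|t| - lam) 0 = 0 := max_eq_right (by linarith)
    rw [hmax, mul_zero]
    have hev : (fun s : ℝ => (1 / 2) * max (|s| - lam) 0 ^ 2) =ᶠ[nhds t]
        fun _ => (0 : ℝ) := by
      have hopen : IsOpen {s : ℝ | |s| < lam} := isOpen_lt continuous_abs continuous_const
      filter_upwards [hopen.mem_nhds h] with s hs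
      have hs' : |s| < lam := hs
      simp [max_eq_right (by linarith : |s| - lam ≤ 0)]
    exact (hasDerivAt_const t (0 : ℝ)).congr_of_eventuallyEq hev
  · -- |t| = lam : derivative 0 by direct estimate
    have hmax : max (|t| - lam) 0 = 0 := by rw [h]; simp
    rw [hmax, mul_zero]
    rw [hasDerivAt_iff_isLittleO]
    have hft : (1 / 2) * max (|t| - lam) 0 ^ 2 = 0 := by rw [hmax]; ring
    simp only [hft, smul_zero, sub_zero]
    rw [Asymptotics.isLittleO_iff]
    intro c hc
    have : ∀ᶠ s in nhds t, |s - t| < 2 * c := by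
      have : Continuous fun s : ℝ => |s - t| := (continuous_id.sub continuous_const).abs
      have := this.continuousAt (x := t)
      exact this.eventually_lt continuousAt_const (by simp [hc])
    filter_upwards [this] with s hs
    have hkey : max (|s| - lam) 0 ≤ |s - t| := by
      rcases le_total (|s|) lam with h2 | h2
      · simp [max_eq_right (by linarith : |s| - lam ≤ 0), abs_nonneg]
      · rw [max_eq_left (by linarith)]
        calc |s| - lam = |s| - |t| := by rw [h]
          _ ≤ |s - t| := abs_sub_abs_le_abs_sub s t
    have h0 : (0:ℝ) ≤ max (|s| - lam) 0 := le_max_right _ _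
    have : (1 / 2) * max (|s| - lam) 0 ^ 2 ≤ (1/2) * (|s - t| * |s - t|) := by
      nlinarith
    simp only [Real.norm_eq_abs]
    rw [abs_of_nonneg (by positivity)]
    nlinarith [abs_nonneg (s - t)]
  · -- |t| > lam
    have ht0 : t ≠ 0 := by
      intro h0; rw [h0] at h; simp at h; linarith
    have hopen : IsOpen {s : ℝ | lam < |s|} := isOpen_lt continuous_const continuous_abs
    have hev : (fun s : ℝ => (1 / 2) * max (|s| - lam) 0 ^ 2) =ᶠ[nhds t]
        fun s => (1 / 2) * (|s| - lam) ^ 2 := by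
      filter_upwards [hopen.mem_nhds h] with s hs
      have hs' : lam < |s| := hs
      rw [max_eq_left (by linarith)]
    have habs : HasDerivAt (fun s : ℝ => |s|) ((SignType.sign t : ℝ)) t :=
      hasDerivAt_abs ht0
    have h1 : HasDerivAt (fun s : ℝ => (1 / 2) * (|s| - lam) ^ 2)
        ((1 / 2) * (2 * (|t| - lam) ^ 1 * (SignType.sign t : ℝ))) t :=
      ((habs.sub_const lam).pow 2).const_mul (1 / 2)
    have hsign : (SignType.sign t : ℝ) = Real.sign t := by
      rcases lt_trichotomy t 0 with h' | h' | h'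
      · simp [h', Real.sign_of_neg h']
      · exact absurd h' ht0
      · simp [h', Real.sign_of_pos h']
    have h2 := h1.congr_of_eventuallyEq hev
    refine h2.congr_deriv ?_
    rw [max_eq_left (by linarith), hsign]
    ring
/-- The function `g(z) = ½‖S_λ(z)‖²` is differentiable with gradient `∇g(z) = S_λ(z)`. -/
theorem hasGradientAt_half_sq_norm_softShrink {n : ℕ} (lam : ℝ) (hlam : 0 ≤ lam) :
    ∀ z : EuclideanSpace ℝ (Fin n),
      HasGradientAt (fun w : EuclideanSpace ℝ (Fin n) => (1 / 2) * ‖softShrink lam w‖ ^ 2)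
        (softShrink lam z) z := by
  intro z
  rw [hasGradientAt_iff_hasFDerivAt]
  have hfun : ∀ w : EuclideanSpace ℝ (Fin n),
      (1 / 2) * ‖softShrink lam w‖ ^ 2 = ∑ i, (1 / 2) * max (|w i| - lam) 0 ^ 2 := by
    intro w
    have h1 : ‖softShrink lam w‖ ^ 2 = ∑ i, (softShrink lam w i) ^ 2 := by
      rw [EuclideanSpace.norm_eq, Real.sq_sqrt (by positivity)]
      simp [Real.norm_eq_abs, sq_abs]
    rw [h1, Finset.mul_sum]
    refine Finset.sum_congr rfl fun i _ => ?_
    congr 1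
    show (Real.sign (w i) * max (|w i| - lam) 0) ^ 2 = max (|w i| - lam) 0 ^ 2
    rcases eq_or_ne (w i) 0 with h0 | h0
    · simp [h0, max_eq_right (by linarith : -lam ≤ 0)]
    · rcases Real.sign_apply_eq_of_ne_zero (w i) h0 with hs | hs <;> rw [hs] <;> ring
  have hsum : HasFDerivAt
      (fun w : EuclideanSpace ℝ (Fin n) => ∑ i, (1 / 2) * max (|w i| - lam) 0 ^ 2)
      (∑ i, softShrink lam z i •
        (EuclideanSpace.proj i : EuclideanSpace ℝ (Fin n) →L[ℝ] ℝ)) z :=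
    HasFDerivAt.fun_sum fun i _ => by
      have hg : HasFDerivAt (fun w : EuclideanSpace ℝ (Fin n) => w i)
          (EuclideanSpace.proj i : EuclideanSpace ℝ (Fin n) →L[ℝ] ℝ) z :=
        (EuclideanSpace.proj i : EuclideanSpace ℝ (Fin n) →L[ℝ] ℝ).hasFDerivAt
      have := (softShrink_hasDerivAt_aux lam hlam (z i)).comp_hasFDerivAt z hg
      exact this
  have heq : (InnerProductSpace.toDual ℝ (EuclideanSpace ℝ (Fin n))) (softShrink lam z) =
      ∑ i, softShrink lam z i •
        (EuclideanSpace.proj i : EuclideanSpace ℝ (Fin n) →L[ℝ] ℝ) := by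
    ext w
    simp [InnerProductSpace.toDual_apply_apply, PiLp.inner_apply, RCLike.inner_apply,
      EuclideanSpace.proj, mul_comm]
  simp only [hfun]
  rw [heq]
  exact hsum
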